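/- In the case γ = λ²/3 (so 3γ - λ² = 0), the function M = (1-uΣ)²/Ω_V with u = λ/√6 satisfies M' = -[6(Σ-u)²/(1-uΣ)]M ≤ 0 along solutions, with equality exactly on the line Σ = u; moreover, along solutions, at points with Σ = u and Ω > 0 one has M'' = 0 and M''' = -108 Ω² u²(1-u²)³/Ω_V < 0 (for u ≠ 0), so solutions only pass through inflection points of M on {Σ = u, Ω > 0}. -/

import Mathlib

/-!
Where `Ω_V ≠ 0`, `M' = (Σ - u)² g` with `g = -6 (1 - uΣ) / Ω_V < 0`, which gives the sign of
`M'` and its zero set. Differentiating a product with a double factor `(Σ - u)²` twice more shows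
that where `Σ = u` one has `M'' = 0` and `M''' = 2 Σ'² g`, and on that line the flow gives
`Σ' = -3 u Ω (1 - u²)`.
-/

open Filter Topology
open scoped ContDiff

section

variable {𝕜 : Type*} [NontriviallyNormedField 𝕜]

theorem ContDiffAt.differentiableAt_deriv {F : Type*} [NormedAddCommGroup F] [NormedSpace 𝕜 F]
    {f : 𝕜 → F} {x : 𝕜} (hf : ContDiffAt 𝕜 2 f x) : DifferentiableAt 𝕜 (deriv f) x := by
  obtain ⟨U, hU, hfU⟩ := hf.contDiffOn le_rfl (by simp)
  obtain ⟨V, hVU, hV, hxV⟩ := mem_nhds_iff.1 hU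
  exact (((hfU.mono hVU).deriv_of_isOpen hV (m := 1) (by norm_num)).differentiableOn
    one_ne_zero).differentiableAt (hV.mem_nhds hxV)

theorem iterate_deriv_of_deriv_eventuallyEq_sq_mul {f s g : 𝕜 → 𝕜} {x c : 𝕜}
    (hf : deriv f =ᶠ[𝓝 x] fun t => (s t - c) ^ 2 * g t)
    (hs : ContDiffAt 𝕜 2 s x) (hg : ContDiffAt 𝕜 2 g x) (hsx : s x = c) :
    deriv^[2] f x = 0 ∧ deriv^[3] f x = 2 * deriv s x ^ 2 * g x := by
  have hs' : ∀ᶠ t in 𝓝 x, DifferentiableAt 𝕜 s t :=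
    (hs.eventually (by simp)).mono fun t ht => ht.differentiableAt (by simp)
  have hg' : ∀ᶠ t in 𝓝 x, DifferentiableAt 𝕜 g t :=
    (hg.eventually (by simp)).mono fun t ht => ht.differentiableAt (by simp)
  have h2 : deriv (deriv f) =ᶠ[𝓝 x]
      fun t => (s t - c) * (2 * deriv s t * g t + (s t - c) * deriv g t) := by
    filter_upwards [hf.deriv, hs', hg'] with t ht hst hgt
    rw [ht, (((hst.hasDerivAt.sub_const c).fun_pow 2).fun_mul hgt.hasDerivAt).deriv]
    ring
  have hds := hs.differentiableAt_deriv
  have hdg := hg.differentiableAt_deriv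
  have hsx' := hs'.self_of_nhds
  have hgx' := hg'.self_of_nhds
  refine ⟨?_, ?_⟩
  · show deriv (deriv f) x = 0
    rw [h2.eq_of_nhds, hsx, sub_self, zero_mul]
  · show deriv (deriv (deriv f)) x = _
    rw [h2.deriv_eq, deriv_fun_mul (by fun_prop) (by fun_prop), hsx]
    simp only [deriv_sub_const_fun, sub_self, zero_mul, add_zero]
    ring

end

theorem contDiff_infty_of_hasDerivAt_comp {E : Type*} [NormedAddCommGroup E] [NormedSpace ℝ E]
    {f : E → E} {x : ℝ → E} (hf : ContDiff ℝ ∞ f) (hx : ∀ t, HasDerivAt x (f (x t)) t) :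
    ContDiff ℝ ∞ x := by
  have hderiv : deriv x = f ∘ x := funext fun t => (hx t).deriv
  refine contDiff_infty.2 fun n => ?_
  induction n with
  | zero => exact contDiff_zero.2 (continuous_iff_continuousAt.2 fun t => (hx t).continuousAt)
  | succ n ih =>
    rw [Nat.cast_succ, contDiff_succ_iff_deriv, hderiv]
    exact ⟨fun t => (hx t).differentiableAt, by simp,
      (hf.of_le (by exact_mod_cast le_top)).comp ih⟩

/- The system with `γ = λ²/3` written in `u = λ/√6`: then `(3/2)γ = 3u²`, `3γ = 6u²` and
`√(3/2) λ = 3u`. -/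
def sigmaDot (u s o : ℝ) : ℝ :=
  -(2 - (-1 + 3 * s ^ 2 + 3 * u ^ 2 * o)) * s + 3 * u * (1 - s ^ 2 - o)

def omegaDot (u s o : ℝ) : ℝ :=
  (2 * (1 + (-1 + 3 * s ^ 2 + 3 * u ^ 2 * o)) - 6 * u ^ 2) * o

structure IsBifurcationSolution (u : ℝ) (S O : ℝ → ℝ) : Prop where
  hasDerivAt_sigma : ∀ t, HasDerivAt S (sigmaDot u (S t) (O t)) t
  hasDerivAt_omega : ∀ t, HasDerivAt O (omegaDot u (S t) (O t)) t

namespace IsBifurcationSolution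

variable {u : ℝ} {S O : ℝ → ℝ} {N : ℝ}

theorem contDiff (h : IsBifurcationSolution u S O) : ContDiff ℝ ∞ S ∧ ContDiff ℝ ∞ O := by
  have hf : ContDiff ℝ ∞ fun p : ℝ × ℝ => (sigmaDot u p.1 p.2, omegaDot u p.1 p.2) := by
    unfold sigmaDot omegaDot
    fun_prop
  have hx := contDiff_infty_of_hasDerivAt_comp hf fun t =>
    (h.hasDerivAt_sigma t).prodMk (h.hasDerivAt_omega t)
  exact ⟨contDiff_fst.comp hx, contDiff_snd.comp hx⟩

theorem hasDerivAt_lyapunov (h : IsBifurcationSolution u S O) (hN : 1 - S N ^ 2 - O N ≠ 0) :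
    HasDerivAt (fun t => (1 - u * S t) ^ 2 / (1 - S t ^ 2 - O t))
      ((S N - u) ^ 2 * (-6 * (1 - u * S N) / (1 - S N ^ 2 - O N))) N := by
  have hS := h.hasDerivAt_sigma N
  refine ((((hS.const_mul u).const_sub 1).fun_pow 2).fun_div
    (((hS.fun_pow 2).const_sub 1).fun_sub (h.hasDerivAt_omega N)) hN).congr_deriv ?_
  unfold sigmaDot omegaDot
  field_simp
  ring

theorem deriv_lyapunov_eventuallyEq (h : IsBifurcationSolution u S O)
    (hN : 1 - S N ^ 2 - O N ≠ 0) :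
    deriv (fun t => (1 - u * S t) ^ 2 / (1 - S t ^ 2 - O t)) =ᶠ[𝓝 N]
      fun t => (S t - u) ^ 2 * (-6 * (1 - u * S t) / (1 - S t ^ 2 - O t)) := by
  have hcont : ContinuousAt (fun t => 1 - S t ^ 2 - O t) N :=
    (((h.hasDerivAt_sigma N).continuousAt.pow 2).const_sub 1).sub
      (h.hasDerivAt_omega N).continuousAt
  exact (hcont.eventually_ne hN).mono fun t ht => (h.hasDerivAt_lyapunov ht).deriv

theorem deriv_lyapunov (h : IsBifurcationSolution u S O) (hu : u ^ 2 < 1)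
    (hN : S N ^ 2 + O N < 1) (hON : 0 < O N) :
    deriv (fun t => (1 - u * S t) ^ 2 / (1 - S t ^ 2 - O t)) N
        = -(6 * (S N - u) ^ 2 / (1 - u * S N)) * ((1 - u * S N) ^ 2 / (1 - S N ^ 2 - O N)) ∧
      deriv (fun t => (1 - u * S t) ^ 2 / (1 - S t ^ 2 - O t)) N ≤ 0 ∧
      (deriv (fun t => (1 - u * S t) ^ 2 / (1 - S t ^ 2 - O t)) N = 0 ↔ S N = u) := by
  have hD : 0 < 1 - S N ^ 2 - O N := by linarith
  have hA : 0 < 1 - u * S N := by nlinarith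
  have hg : -6 * (1 - u * S N) / (1 - S N ^ 2 - O N) < 0 :=
    div_neg_of_neg_of_pos (by linarith) hD
  rw [(h.deriv_lyapunov_eventuallyEq hD.ne').eq_of_nhds]
  refine ⟨by field_simp, mul_nonpos_of_nonneg_of_nonpos (sq_nonneg _) hg.le, ?_⟩
  rw [mul_eq_zero, or_iff_left hg.ne, pow_eq_zero_iff two_ne_zero, sub_eq_zero]

theorem lyapunov_inflection (h : IsBifurcationSolution u S O) (hu : u ^ 2 < 1) (hu0 : u ≠ 0)
    (hN : S N ^ 2 + O N < 1) (hON : 0 < O N) (hSN : S N = u) :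
    deriv^[2] (fun t => (1 - u * S t) ^ 2 / (1 - S t ^ 2 - O t)) N = 0 ∧
      deriv^[3] (fun t => (1 - u * S t) ^ 2 / (1 - S t ^ 2 - O t)) N
        = -(108 * O N ^ 2 * u ^ 2 * (1 - u ^ 2) ^ 3) / (1 - S N ^ 2 - O N) ∧
      deriv^[3] (fun t => (1 - u * S t) ^ 2 / (1 - S t ^ 2 - O t)) N < 0 := by
  have hD : 0 < 1 - S N ^ 2 - O N := by linarith
  have hS : ContDiff ℝ 2 S := h.contDiff.1.of_le (by norm_cast)
  have hO : ContDiff ℝ 2 O := h.contDiff.2.of_le (by norm_cast)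
  have hg : ContDiffAt ℝ 2 (fun t => -6 * (1 - u * S t) / (1 - S t ^ 2 - O t)) N := by
    fun_prop (disch := exact hD.ne')
  obtain ⟨h2, h3⟩ := iterate_deriv_of_deriv_eventuallyEq_sq_mul
    (h.deriv_lyapunov_eventuallyEq hD.ne') hS.contDiffAt hg hSN
  have hSdot : deriv S N = -3 * u * O N * (1 - u ^ 2) := by
    rw [(h.hasDerivAt_sigma N).deriv, hSN]
    unfold sigmaDot
    ring
  have h3' : deriv^[3] (fun t => (1 - u * S t) ^ 2 / (1 - S t ^ 2 - O t)) N
      = -(108 * O N ^ 2 * u ^ 2 * (1 - u ^ 2) ^ 3) / (1 - S N ^ 2 - O N) := by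
    rw [h3, hSdot, hSN]
    ring
  have h1u : 0 < 1 - u ^ 2 := by linarith
  refine ⟨h2, h3', ?_⟩
  rw [h3']
  exact div_neg_of_neg_of_pos (neg_neg_of_pos (by positivity)) hD

end IsBifurcationSolution

theorem stmt_8 (lam gam : ℝ) (hl : 0 < lam) (hl6 : lam ^ 2 < 6) (hbif : gam = lam ^ 2 / 3)
    (S O : ℝ → ℝ)
    (hS : ∀ N, HasDerivAt S (-(2 - (-1 + 3 * S N ^ 2 + 3 / 2 * gam * O N)) * S N
        + Real.sqrt (3 / 2) * lam * (1 - S N ^ 2 - O N)) N)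
    (hO : ∀ N, HasDerivAt O
        ((2 * (1 + (-1 + 3 * S N ^ 2 + 3 / 2 * gam * O N)) - 3 * gam) * O N) N) :
    ∀ N, S N ^ 2 + O N < 1 → 0 < O N →
      (deriv (fun N => (1 - lam / Real.sqrt 6 * S N) ^ 2 / (1 - S N ^ 2 - O N)) N
          = -(6 * (S N - lam / Real.sqrt 6) ^ 2 / (1 - lam / Real.sqrt 6 * S N))
            * ((1 - lam / Real.sqrt 6 * S N) ^ 2 / (1 - S N ^ 2 - O N)) ∧
        deriv (fun N => (1 - lam / Real.sqrt 6 * S N) ^ 2 / (1 - S N ^ 2 - O N)) N ≤ 0 ∧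
        (deriv (fun N => (1 - lam / Real.sqrt 6 * S N) ^ 2 / (1 - S N ^ 2 - O N)) N = 0
          ↔ S N = lam / Real.sqrt 6)) ∧
      (S N = lam / Real.sqrt 6 →
        deriv^[2] (fun N => (1 - lam / Real.sqrt 6 * S N) ^ 2 / (1 - S N ^ 2 - O N)) N = 0 ∧
        deriv^[3] (fun N => (1 - lam / Real.sqrt 6 * S N) ^ 2 / (1 - S N ^ 2 - O N)) N
          = -(108 * (O N) ^ 2 * (lam / Real.sqrt 6) ^ 2 * (1 - (lam / Real.sqrt 6) ^ 2) ^ 3)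
            / (1 - S N ^ 2 - O N) ∧
        deriv^[3] (fun N => (1 - lam / Real.sqrt 6 * S N) ^ 2 / (1 - S N ^ 2 - O N)) N < 0) := by
  intro N hN hON
  have hsqrt6 : 0 < Real.sqrt 6 := by positivity
  set u := lam / Real.sqrt 6 with hu
  have hlam : lam ^ 2 = 6 * u ^ 2 := by
    rw [hu, div_pow, Real.sq_sqrt (by norm_num)]
    ring
  have hsqrt : Real.sqrt (3 / 2) * lam = 3 * u := by
    have h : Real.sqrt (3 / 2) * Real.sqrt 6 = 3 := by
      rw [← Real.sqrt_mul (by norm_num), show (3 / 2 * 6 : ℝ) = 3 ^ 2 by norm_num,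
        Real.sqrt_sq (by norm_num)]
    have hlam' : lam = u * Real.sqrt 6 := by
      rw [hu]
      field_simp
    linear_combination u * h + Real.sqrt (3 / 2) * hlam'
  have hsol : IsBifurcationSolution u S O :=
    ⟨fun t => (hS t).congr_deriv (by unfold sigmaDot; rw [hbif, hsqrt, hlam]; ring),
      fun t => (hO t).congr_deriv (by unfold omegaDot; rw [hbif, hlam]; ring)⟩
  have hu1 : u ^ 2 < 1 := by linarith
  exact ⟨hsol.deriv_lyapunov hu1 hN hON,
    hsol.lyapunov_inflection hu1 (div_pos hl hsqrt6).ne' hN hON⟩
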